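/- (Correctness of the reduction underlying Theorem 2.) Let (u_α, v_α)_{α∈[d]} be a Post correspondence instance over a finite alphabet Σ of size b ≥ 1, let λ ∈ ℚ, and let A^{(1)},…,A^{(d)} ∈ ℕ^{6×6}, L = e₆, R = e₁ − e₂ + e₃ − (λ+1)e₆ be the encoding matrices and boundary vectors of Lemma 1. Define the MPO tensor M by M^{(α,β)} := δ_{α,β} A^{(α)}. Then the following are equivalent: (i) there exists a system size n ≥ 1 such that ρ(L,M,R,n) + λ𝟙 is not positive semidefinite; (ii) the Post correspondence instance has a solution, i.e., there exists a nonempty word w ∈ [d]* with U(w) = V(w). -/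

import Mathlib

/-- The numeric representation `σ : Σ* → ℕ` associated with an enumeration
bijection `e : Σ ≃ Fin b` (so that `σ₀(a) = e(a) + 1 ∈ {1,…,b}`):
`σ(w) = Σ_{j=1}^{|w|} σ₀(w_j) · b^{|w|−j}`, with `σ(∅) = 0`. -/
def numRep {S : Type*} (b : ℕ) (e : S ≃ Fin b) (w : List S) : ℕ :=
  ∑ j : Fin w.length, ((e (w.get j) : ℕ) + 1) * b ^ (w.length - 1 - (j : ℕ))

/-- The 6×6 integer encoding matrix `A(u,v)` built from the numeric representation `σ`. -/
def encMat {S : Type*} (b : ℕ) (e : S ≃ Fin b) (u v : List S) :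
    Matrix (Fin 6) (Fin 6) ℤ :=
  !![(b : ℤ) ^ (2 * u.length), 0, 0, 0, 0, 0;
     0, (b : ℤ) ^ (u.length + v.length), 0, 0, 0, 0;
     0, 0, (b : ℤ) ^ (2 * v.length), 0, 0, 0;
     (numRep b e u : ℤ) * (b : ℤ) ^ u.length, (numRep b e v : ℤ) * (b : ℤ) ^ u.length, 0,
       (b : ℤ) ^ u.length, 0, 0;
     0, (numRep b e u : ℤ) * (b : ℤ) ^ v.length, (numRep b e v : ℤ) * (b : ℤ) ^ v.length, 0,
       (b : ℤ) ^ v.length, 0;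
     (numRep b e u : ℤ) ^ 2, 2 * (numRep b e u : ℤ) * (numRep b e v : ℤ), (numRep b e v : ℤ) ^ 2,
       2 * (numRep b e u : ℤ), 2 * (numRep b e v : ℤ), 1]

/-- The rational 6×6 encoding matrices `A^{(α)} = A(u_α, v_α)` of a PCP instance. -/
def encMatQ {S : Type*} (b : ℕ) (e : S ≃ Fin b) {d : ℕ} (u v : Fin d → List S)
    (α : Fin d) : Matrix (Fin 6) (Fin 6) ℚ :=
  (encMat b e (u α) (v α)).map (Int.cast : ℤ → ℚ)

/-- The boundary vector `L = e₆ ∈ ℚ⁶` (sixth standard basis vector). -/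
def bndL : Fin 6 → ℚ := Pi.single 5 1

/-- The boundary vector `R = e₁ − e₂ + e₃ − (λ+1)e₆ ∈ ℚ⁶`. -/
def bndR (lam : ℚ) : Fin 6 → ℚ :=
  (Pi.single 0 1 : Fin 6 → ℚ) - (Pi.single 1 1 : Fin 6 → ℚ)
    + (Pi.single 2 1 : Fin 6 → ℚ) - (lam + 1) • (Pi.single 5 1 : Fin 6 → ℚ)

/-- The translation-invariant matrix product operator `ρ(L,M,R,n)` on `(ℚ^d)^{⊗n}`
generated by the MPO tensor `M = (M^{(α,β)}_{i,j})` and boundary vectors `L, R ∈ ℚ^D`: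
`ρ(L,M,R,n) = Σ_{j ∈ [D]^{n+1}} L_{j₁} M_{j₁,j₂} ⊗ ⋯ ⊗ M_{j_n,j_{n+1}} R_{j_{n+1}}`,
written entrywise in the standard tensor-product basis of `(ℚ^d)^{⊗n}`. -/
def mpo {d D : ℕ} (L R : Fin D → ℚ) (M : Fin d → Fin d → Matrix (Fin D) (Fin D) ℚ)
    (n : ℕ) : Matrix (Fin n → Fin d) (Fin n → Fin d) ℚ :=
  fun a c => ∑ j : Fin (n + 1) → Fin D,
    L (j 0) * (∏ t : Fin n, M (a t) (c t) (j t.castSucc) (j t.succ)) * R (j (Fin.last n))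

/-- The diagonal MPO tensor `M^{(α,β)} = δ_{α,β} A^{(α)}` built from the encoding
matrices of a PCP instance. -/
def pcpTensor {S : Type*} (b : ℕ) (e : S ≃ Fin b) {d : ℕ} (u v : Fin d → List S)
    (α β : Fin d) : Matrix (Fin 6) (Fin 6) ℚ :=
  if α = β then encMatQ b e u v α else 0

/-!
The MPO tensor is diagonal in the physical indices, so `ρ(L,M,R,n)` is diagonal in the basis of
words `a ∈ [d]ⁿ`, with entry `L · A^{(a₁)} ⋯ A^{(aₙ)} · R`. The encoding is multiplicative,
`A(u,v) A(u',v') = A(uu',vv')`, so this entry is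
`L · A(U(a),V(a)) · R = (σ(U(a)) − σ(V(a)))² − (λ+1)`. Hence `ρ + λ𝟙` is diagonal with entries
`(σ(U(a)) − σ(V(a)))² − 1`, which is negative exactly when `σ(U(a)) = σ(V(a))`. Since `σ` is
bijective base-`b` numeration (digits `1, …, b`), it is injective, and that happens exactly when
`a` solves the instance.
-/

open Matrix

lemma Nat.eq_and_eq_of_mul_add_succ_eq {b x y c c' : ℕ} (hc : c < b) (hc' : c' < b)
    (h : x * b + (c + 1) = y * b + (c' + 1)) : x = y ∧ c = c' := by
  have hb : 0 < b := by omega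
  have h' : c' + b * y = c + b * x := by linarith
  obtain ⟨hdiv, hmod⟩ := (Nat.div_mod_unique hb).mpr ⟨h', hc'⟩
  rw [Nat.add_mul_div_left _ _ hb, Nat.div_eq_of_lt hc, zero_add] at hdiv
  rw [Nat.add_mul_mod_self_left, Nat.mod_eq_of_lt hc] at hmod
  exact ⟨hdiv, hmod⟩

lemma Nat.one_le_cast_sub_sq_iff {R : Type*} [CommRing R] [LinearOrder R] [IsStrictOrderedRing R]
    {p q : ℕ} : (1 : R) ≤ ((p : R) - q) ^ 2 ↔ p ≠ q := by
  have hcast : ((p : R) - q) = ((p - q : ℤ) : R) := by push_cast; rfl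
  rw [one_le_sq_iff_one_le_abs, hcast, ← Int.cast_abs, ← Int.cast_one, Int.cast_le]
  constructor
  · rintro h rfl
    simp at h
  · exact fun h => Int.one_le_abs (sub_ne_zero.mpr (by exact_mod_cast h))

lemma Matrix.forall_dotProduct_diagonal_mulVec_nonneg_iff {ι R : Type*} [Fintype ι]
    [DecidableEq ι] [CommRing R] [LinearOrder R] [IsStrictOrderedRing R] (f : ι → R) :
    (∀ x : ι → R, 0 ≤ x ⬝ᵥ (diagonal f *ᵥ x)) ↔ ∀ i, 0 ≤ f i := by
  refine ⟨fun h i => by simpa using h (Pi.single i 1), fun h x => ?_⟩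
  simp only [mulVec_diagonal, dotProduct]
  exact Finset.sum_nonneg fun i _ => by nlinarith [h i, mul_self_nonneg (x i)]

lemma sum_paths_eq_dotProduct_list_prod_mulVec {R : Type*} [CommSemiring R] {D : ℕ} :
    ∀ (n : ℕ) (M : Fin n → Matrix (Fin D) (Fin D) R) (f g : Fin D → R),
      ∑ j : Fin (n + 1) → Fin D,
        f (j 0) * (∏ t : Fin n, M t (j t.castSucc) (j t.succ)) * g (j (Fin.last n))
        = f ⬝ᵥ ((List.ofFn M).prod *ᵥ g)
  | 0, M, f, g => by
    rw [← (Equiv.funUnique (Fin 1) (Fin D)).symm.sum_comp]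
    simp [dotProduct, Fin.last]
  | n + 1, M, f, g => by
    rw [← (Fin.consEquiv fun _ => Fin D).sum_comp, Fintype.sum_prod_type]
    have ih := sum_paths_eq_dotProduct_list_prod_mulVec n (fun t => M t.succ)
    simp only [Fin.consEquiv_apply, Fin.prod_univ_succ, Fin.cons_zero, Fin.castSucc_zero,
      ← Fin.succ_castSucc, ← Fin.succ_last, Fin.cons_succ]
    have hk : ∀ k, ∑ j : Fin (n + 1) → Fin D,
        f k * (M 0 k (j 0) * ∏ t : Fin n, M t.succ (j t.castSucc) (j t.succ)) * g (j (Fin.last n))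
          = f k * (M 0 *ᵥ ((List.ofFn fun t => M t.succ).prod *ᵥ g)) k := by
      intro k
      rw [mulVec, ← ih, Finset.mul_sum]
      exact Finset.sum_congr rfl fun j _ => by ring
    rw [Finset.sum_congr rfl fun k _ => hk k, List.ofFn_succ, List.prod_cons, ← mulVec_mulVec]
    rfl

section NumRep

variable {S : Type*} {b : ℕ} (e : S ≃ Fin b)

@[simp]
lemma numRep_nil : numRep b e [] = 0 := rfl

lemma numRep_cons (a : S) (w : List S) :
    numRep b e (a :: w) = ((e a : ℕ) + 1) * b ^ w.length + numRep b e w := by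
  simp only [numRep, List.length_cons, Fin.sum_univ_succ, List.get_eq_getElem, Fin.val_zero,
    Fin.val_succ, List.getElem_cons_zero, List.getElem_cons_succ]
  congr 1
  refine Finset.sum_congr rfl fun j _ => ?_
  congr 2
  omega

lemma numRep_append (w w' : List S) :
    numRep b e (w ++ w') = numRep b e w * b ^ w'.length + numRep b e w' := by
  induction w with
  | nil => simp
  | cons a w ih =>
    rw [List.cons_append, numRep_cons, numRep_cons, ih, List.length_append]
    ring

lemma numRep_concat (w : List S) (a : S) :
    numRep b e (w ++ [a]) = numRep b e w * b + ((e a : ℕ) + 1) := by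
  simp [numRep_append, numRep_cons]

lemma numRep_injective : Function.Injective (numRep b e) := by
  intro w₁ w₂ h
  induction w₁ using List.reverseRecOn generalizing w₂ with
  | nil =>
    rcases w₂.eq_nil_or_concat with rfl | ⟨w₂, a₂, rfl⟩
    · rfl
    · simp [numRep_concat] at h
  | append_singleton w₁ a₁ ih =>
    rcases w₂.eq_nil_or_concat with rfl | ⟨w₂, a₂, rfl⟩
    · simp [numRep_concat] at h
    rw [List.concat_eq_append, numRep_concat, numRep_concat] at h
    obtain ⟨hw, ha⟩ := Nat.eq_and_eq_of_mul_add_succ_eq (e a₁).isLt (e a₂).isLt h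
    rw [List.concat_eq_append, ih hw, e.injective (Fin.val_injective ha)]

end NumRep

section EncMat

variable {S : Type*} {b : ℕ} (e : S ≃ Fin b)

lemma encMat_nil_nil : encMat b e [] [] = 1 := by
  ext i j
  fin_cases i <;> fin_cases j <;> simp [encMat]

lemma encMat_mul_encMat (u v u' v' : List S) :
    encMat b e u v * encMat b e u' v' = encMat b e (u ++ u') (v ++ v') := by
  have hu : (numRep b e (u ++ u') : ℤ) = numRep b e u * (b : ℤ) ^ u'.length + numRep b e u' := by
    rw [numRep_append]; push_cast; ring
  have hv : (numRep b e (v ++ v') : ℤ) = numRep b e v * (b : ℤ) ^ v'.length + numRep b e v' := by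
    rw [numRep_append]; push_cast; ring
  ext i j
  fin_cases i <;> fin_cases j <;>
    (simp [encMat, Matrix.mul_apply, Fin.sum_univ_six, hu, hv, List.length_append] <;> ring)

lemma list_prod_map_encMat {ι : Type*} (u v : ι → List S) (w : List ι) :
    (w.map fun α => encMat b e (u α) (v α)).prod
      = encMat b e (w.map u).flatten (w.map v).flatten := by
  induction w with
  | nil => exact (encMat_nil_nil e).symm
  | cons α w ih => rw [List.map_cons, List.prod_cons, ih, encMat_mul_encMat]; rfl

end EncMat

lemma mpo_apply {d D : ℕ} (L R : Fin D → ℚ) (M : Fin d → Fin d → Matrix (Fin D) (Fin D) ℚ)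
    (n : ℕ) (a c : Fin n → Fin d) :
    mpo L R M n a c = L ⬝ᵥ ((List.ofFn fun t => M (a t) (c t)).prod *ᵥ R) :=
  sum_paths_eq_dotProduct_list_prod_mulVec n _ L R

section Reduction

variable {S : Type*} {b d : ℕ} (e : S ≃ Fin b) (u v : Fin d → List S)

lemma bndL_dotProduct_encMat_mulVec_bndR (lam : ℚ) (U V : List S) :
    bndL ⬝ᵥ ((encMat b e U V).map (Int.cast : ℤ → ℚ) *ᵥ bndR lam)
      = ((numRep b e U : ℚ) - numRep b e V) ^ 2 - (lam + 1) := by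
  simp [bndL, bndR, encMat, mulVec, dotProduct, Fin.sum_univ_six, Pi.single_apply]
  ring

lemma mpo_pcpTensor (lam : ℚ) (n : ℕ) :
    mpo bndL (bndR lam) (pcpTensor b e u v) n = diagonal fun a =>
      ((numRep b e ((List.ofFn a).map u).flatten : ℚ)
        - numRep b e ((List.ofFn a).map v).flatten) ^ 2 - (lam + 1) := by
  ext a c
  rw [mpo_apply]
  by_cases hac : a = c
  · subst hac
    have hfactors : (List.ofFn fun t => pcpTensor b e u v (a t) (a t))
        = ((List.ofFn a).map fun α => encMat b e (u α) (v α)).map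
            (Int.castRingHom ℚ).mapMatrix := by
      simp [List.map_ofFn, pcpTensor, encMatQ, Function.comp_def]
    rw [diagonal_apply_eq, hfactors, ← map_list_prod, list_prod_map_encMat,
      RingHom.mapMatrix_apply]
    exact bndL_dotProduct_encMat_mulVec_bndR e lam _ _
  · obtain ⟨t, ht⟩ := Function.ne_iff.mp hac
    have hzero : (0 : Matrix (Fin 6) (Fin 6) ℚ)
        ∈ List.ofFn fun t => pcpTensor b e u v (a t) (c t) :=
      List.mem_ofFn.mpr ⟨t, if_neg ht⟩
    rw [diagonal_apply_ne _ hac, List.prod_eq_zero hzero, zero_mulVec, dotProduct_zero]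

lemma mpo_pcpTensor_add_smul_one (lam : ℚ) (n : ℕ) :
    mpo bndL (bndR lam) (pcpTensor b e u v) n + lam • 1 = diagonal fun a =>
      ((numRep b e ((List.ofFn a).map u).flatten : ℚ)
        - numRep b e ((List.ofFn a).map v).flatten) ^ 2 - 1 := by
  rw [mpo_pcpTensor, smul_one_eq_diagonal, diagonal_add]
  congr 1
  funext a
  ring

end Reduction

open Matrix in
theorem reduction_correct_unbounded_general {S : Type*} {b d : ℕ} (e : S ≃ Fin b)
    (u v : Fin d → List S) (lam : ℚ) :
    (∃ n : ℕ, 1 ≤ n ∧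
        ¬ ∀ x : (Fin n → Fin d) → ℚ,
            0 ≤ x ⬝ᵥ ((mpo bndL (bndR lam) (pcpTensor b e u v) n + lam • 1).mulVec x))
      ↔ ∃ w : List (Fin d), w ≠ [] ∧ (w.map u).flatten = (w.map v).flatten := by
  simp only [mpo_pcpTensor_add_smul_one, forall_dotProduct_diagonal_mulVec_nonneg_iff, sub_nonneg,
    Nat.one_le_cast_sub_sq_iff, (numRep_injective e).ne_iff, not_forall, not_not]
  rw [List.exists_iff_exists_tuple]
  simp only [ne_eq, List.ofFn_eq_nil_iff, Nat.one_le_iff_ne_zero, exists_and_left]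

open Matrix in
/-- Correctness of the reduction underlying Theorem 2: for the MPO built from the
Lemma-1 encoding of a PCP instance `(u_α, v_α)_{α∈[d]}` and threshold `λ ∈ ℚ`,
the following are equivalent: (i) there exists a system size `n ≥ 1` such that
`ρ(L,M,R,n) + λ𝟙` is not positive semidefinite; (ii) the PCP instance has a
solution, i.e., a nonempty word `w ∈ [d]*` with `U(w) = V(w)`. -/
theorem reduction_correct_unbounded {S : Type*} {b d : ℕ} (hb : 1 ≤ b) (e : S ≃ Fin b)
    (u v : Fin d → List S) (lam : ℚ) :
    (∃ n : ℕ, 1 ≤ n ∧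
        ¬ ∀ x : (Fin n → Fin d) → ℚ,
            0 ≤ x ⬝ᵥ ((mpo bndL (bndR lam) (pcpTensor b e u v) n + lam • 1).mulVec x))
      ↔ ∃ w : List (Fin d), w ≠ [] ∧ (w.map u).flatten = (w.map v).flatten :=
  reduction_correct_unbounded_general e u v lam
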